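/- There exists a constant c_u > 0 such that for all n ≥ 1 and all x ∈ ℝ, the density f(x, n) of the sum of n i.i.d. Uniform[−1,1] random variables satisfies f(x, n) ≤ c_u / √n. -/

import Mathlib

/-!
For `n ≥ 2` the density has the Fourier representation
`2 S · f(x, n) = ∫ cos (x t) · sinc(t)ⁿ dt`, where `S = ∫ sinc² (= π)`; only `S > 0` is needed.
For `n = 2` this is the Fejér kernel: `cos (x t) sin² t` is a combination of the `sin² (b t)`
with `b = (x ± 2)/2, x/2`, and `∫ b² sinc (b t)² dt = |b| S` by scaling. The step `n → n + 1`
is Fubini together with `½ ∫_{-1}^{1} cos ((x - τ) t) dτ = cos (x t) sinc t`.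
Hence `f(x, n) ≤ (2S)⁻¹ ∫ |sinc|ⁿ`, and the bounds `|sinc t| ≤ exp (-t²/20)` near `0` and
`|sinc t| ≤ 1/|t|` away from it give `∫ |sinc|ⁿ ≤ 12/√n`.
-/

/-- The density of the Uniform[-1,1] distribution. -/
noncomputable def unifDensity (x : ℝ) : ℝ :=
  if x ∈ Set.Icc (-1 : ℝ) 1 then 1 / 2 else 0

/-- `sumUnifDensity n` is the density of the sum of `n` i.i.d. Uniform[-1,1]
random variables, defined (for `n ≥ 1`) as the `n`-fold convolution of the
Uniform[-1,1] density with itself. -/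
noncomputable def sumUnifDensity : ℕ → ℝ → ℝ
  | 0, _ => 0
  | 1, x => unifDensity x
  | (n + 2), x => ∫ τ : ℝ, sumUnifDensity (n + 1) (x - τ) * unifDensity τ

open Real MeasureTheory Set

lemma sinc_abs (t : ℝ) : sinc |t| = sinc t := by
  rcases abs_choice t with h | h <;> simp [h, sinc_neg]

lemma sinc_eq_sinc_half_mul_cos_half (t : ℝ) : sinc t = sinc (t / 2) * cos (t / 2) := by
  rcases eq_or_ne t 0 with rfl | ht
  · simp
  rw [sinc_of_ne_zero ht, sinc_of_ne_zero (by positivity)]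
  nth_rw 1 [← mul_div_cancel₀ t two_ne_zero, sin_two_mul]
  field_simp

lemma sinc_sq_le_two_mul_inv (t : ℝ) : sinc t ^ 2 ≤ 2 * (1 + t ^ 2)⁻¹ := by
  rcases eq_or_ne t 0 with rfl | ht
  · norm_num
  rw [sinc_of_ne_zero ht, div_pow, div_le_iff₀ (by positivity), mul_assoc, ← div_eq_inv_mul,
    ← mul_div_assoc, le_div_iff₀ (by positivity)]
  nlinarith [sin_sq_le_one t, sin_sq_le_sq (x := t)]

lemma abs_sinc_le_inv_abs {t : ℝ} (ht : t ≠ 0) : |sinc t| ≤ |t|⁻¹ := by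
  rw [sinc_of_ne_zero ht, abs_div, div_eq_mul_inv]
  exact mul_le_of_le_one_left (by positivity) (abs_sin_le_one t)

lemma abs_sinc_le_exp_neg_sq {t : ℝ} (ht : |t| ≤ π) : |sinc t| ≤ exp (-(t ^ 2 / 20)) := by
  have hπ : π ^ 2 ≤ 10 := by nlinarith [pi_lt_d2, pi_pos]
  have ht2 : |t / 2| ≤ π := by rw [abs_div, abs_two]; linarith [abs_nonneg t]
  have hcos : 0 ≤ cos (t / 2) :=
    cos_nonneg_of_mem_Icc ⟨by linarith [neg_abs_le t], by linarith [le_abs_self t]⟩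
  calc |sinc t| = |sinc (t / 2)| * cos (t / 2) := by
        rw [sinc_eq_sinc_half_mul_cos_half, abs_mul, abs_of_nonneg hcos]
    _ ≤ cos (t / 2) := mul_le_of_le_one_left hcos (abs_sinc_le_one _)
    _ ≤ 1 - 2 / π ^ 2 * (t / 2) ^ 2 := cos_le_one_sub_mul_cos_sq ht2
    _ ≤ -(t ^ 2 / 20) + 1 := by
        have : t ^ 2 / 20 ≤ 2 / π ^ 2 * (t / 2) ^ 2 := by
          rw [div_mul_eq_mul_div, le_div_iff₀ (by positivity)]
          nlinarith [sq_nonneg t]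
        linarith
    _ ≤ exp (-(t ^ 2 / 20)) := add_one_le_exp _

lemma sq_mul_sinc_mul_sq (b : ℝ) {t : ℝ} (ht : t ≠ 0) :
    b ^ 2 * sinc (b * t) ^ 2 = sin (b * t) ^ 2 / t ^ 2 := by
  rcases eq_or_ne b 0 with rfl | hb
  · simp
  rw [sinc_of_ne_zero (mul_ne_zero hb ht)]
  field_simp

lemma cos_mul_mul_sinc_sq (x t : ℝ) :
    cos (x * t) * sinc t ^ 2 = ((x + 2) / 2) ^ 2 * sinc ((x + 2) / 2 * t) ^ 2 / 2
      + ((x - 2) / 2) ^ 2 * sinc ((x - 2) / 2 * t) ^ 2 / 2 - (x / 2) ^ 2 * sinc (x / 2 * t) ^ 2 := by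
  rcases eq_or_ne t 0 with rfl | ht
  · simp
    ring
  have h := sq_mul_sinc_mul_sq 1 ht
  simp only [one_pow, one_mul] at h
  rw [h, sq_mul_sinc_mul_sq _ ht, sq_mul_sinc_mul_sq _ ht, sq_mul_sinc_mul_sq _ ht,
    show (x + 2) / 2 * t = x / 2 * t + t by ring, show (x - 2) / 2 * t = x / 2 * t - t by ring,
    show x * t = 2 * (x / 2 * t) by ring, cos_two_mul, sin_add, sin_sub]
  generalize x / 2 * t = a
  field_simp
  linear_combination
    (2 * sin t ^ 2) * sin_sq_add_cos_sq a - (2 * sin a ^ 2) * sin_sq_add_cos_sq t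

lemma integrable_sinc_pow {n : ℕ} (hn : 2 ≤ n) : Integrable fun t ↦ sinc t ^ n := by
  refine (integrable_inv_one_add_sq.const_mul 2).mono' (by fun_prop) (ae_of_all _ fun t ↦ ?_)
  calc ‖sinc t ^ n‖ = |sinc t| ^ n := by rw [norm_pow, norm_eq_abs]
    _ ≤ |sinc t| ^ 2 := pow_le_pow_of_le_one (abs_nonneg _) (abs_sinc_le_one t) hn
    _ ≤ 2 * (1 + t ^ 2)⁻¹ := by rw [sq_abs]; exact sinc_sq_le_two_mul_inv t

lemma integrable_abs_sinc_pow {n : ℕ} (hn : 2 ≤ n) : Integrable fun t ↦ |sinc t| ^ n := by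
  simpa only [abs_pow] using (integrable_sinc_pow hn).abs

lemma integral_sinc_sq_pos : 0 < ∫ t, sinc t ^ 2 :=
  integral_pos_of_integrable_nonneg_nonzero (x := 0) (by fun_prop) (integrable_sinc_pow le_rfl)
    (fun t ↦ sq_nonneg _) (by simp)

lemma integrable_sq_mul_sinc_mul_sq (b : ℝ) : Integrable fun t ↦ b ^ 2 * sinc (b * t) ^ 2 := by
  rcases eq_or_ne b 0 with rfl | hb
  · simp
  exact ((integrable_sinc_pow le_rfl).comp_mul_left' hb).const_mul _

lemma integral_sq_mul_sinc_mul_sq (b : ℝ) :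
    ∫ t, b ^ 2 * sinc (b * t) ^ 2 = |b| * ∫ t, sinc t ^ 2 := by
  rw [integral_const_mul, Measure.integral_comp_mul_left (fun t ↦ sinc t ^ 2), smul_eq_mul,
    abs_inv, ← mul_assoc, ← sq_abs]
  rcases eq_or_ne b 0 with rfl | hb
  · simp
  field_simp

lemma setIntegral_Ioc_zero_one_abs_sinc_pow_le {n : ℕ} (hn : 0 < n) :
    ∫ t in Ioc 0 1, |sinc t| ^ n ≤ 4 / √n := by
  have hn' : (0 : ℝ) < n := by exact_mod_cast hn
  calc ∫ t in Ioc 0 1, |sinc t| ^ n ≤ ∫ t in Ioc 0 1, exp (-(n / 20) * t ^ 2) := by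
        refine setIntegral_mono_on (Continuous.integrableOn_Ioc (by fun_prop))
          (integrable_exp_neg_mul_sq (by positivity)).integrableOn measurableSet_Ioc
          fun t ht ↦ ?_
        calc |sinc t| ^ n ≤ exp (-(t ^ 2 / 20)) ^ n := by
              refine pow_le_pow_left₀ (abs_nonneg _) (abs_sinc_le_exp_neg_sq ?_) n
              rw [abs_of_pos ht.1]
              linarith [ht.2, pi_gt_three]
          _ = exp (-(n / 20) * t ^ 2) := by
              rw [← exp_nat_mul]
              ring_nf
    _ ≤ ∫ t in Ioi 0, exp (-(n / 20) * t ^ 2) :=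
        setIntegral_mono_set (integrable_exp_neg_mul_sq (by positivity)).integrableOn
          (ae_of_all _ fun _ ↦ (exp_pos _).le) Ioc_subset_Ioi_self.eventuallyLE
    _ = √(20 * π) / 2 / √n := by
        rw [integral_gaussian_Ioi, div_div_eq_mul_div, sqrt_div' _ hn'.le, mul_comm π]
        ring
    _ ≤ 4 / √n := by
        gcongr
        rw [div_le_iff₀ two_pos, sqrt_le_left (by norm_num)]
        nlinarith [pi_lt_d2]

lemma setIntegral_Ioi_one_abs_sinc_pow_le {n : ℕ} (hn : 2 ≤ n) :
    ∫ t in Ioi 1, |sinc t| ^ n ≤ 1 / (n - 1) := by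
  have hn' : (2 : ℝ) ≤ n := by exact_mod_cast hn
  calc ∫ t in Ioi 1, |sinc t| ^ n ≤ ∫ t in Ioi 1, t ^ (-n : ℝ) := by
        refine setIntegral_mono_on (integrable_abs_sinc_pow hn).integrableOn
          (integrableOn_Ioi_rpow_of_lt (by linarith) one_pos) measurableSet_Ioi fun t ht ↦ ?_
        have ht : 0 < t := zero_lt_one.trans ht
        rw [rpow_neg ht.le, rpow_natCast, ← inv_pow]
        exact pow_le_pow_left₀ (abs_nonneg _)
          (by simpa [abs_of_pos ht] using abs_sinc_le_inv_abs ht.ne') n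
    _ = 1 / (n - 1) := by
        rw [integral_Ioi_rpow_of_lt (by linarith) one_pos, one_rpow, neg_div, ← div_neg]
        ring_nf

lemma integral_abs_sinc_pow_le {n : ℕ} (hn : 2 ≤ n) : ∫ t, |sinc t| ^ n ≤ 12 / √n := by
  have hn' : (2 : ℝ) ≤ n := by exact_mod_cast hn
  have htail : 1 / ((n : ℝ) - 1) ≤ 2 / √n := by
    rw [div_le_div_iff₀ (by linarith) (by positivity)]
    nlinarith [sq_nonneg (√n - 1), sq_sqrt (x := n) (by linarith)]
  calc ∫ t, |sinc t| ^ n = 2 * ∫ t in Ioi 0, |sinc t| ^ n := by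
        simpa only [sinc_abs] using integral_comp_abs (f := fun t ↦ |sinc t| ^ n)
    _ = 2 * ((∫ t in Ioc 0 1, |sinc t| ^ n) + ∫ t in Ioi 1, |sinc t| ^ n) := by
        rw [← Ioc_union_Ioi_eq_Ioi zero_le_one, setIntegral_union (Ioc_disjoint_Ioi le_rfl)
          measurableSet_Ioi (integrable_abs_sinc_pow hn).integrableOn
          (integrable_abs_sinc_pow hn).integrableOn]
    _ ≤ 2 * (4 / √n + 2 / √n) := by
        gcongr
        · exact setIntegral_Ioc_zero_one_abs_sinc_pow_le (by omega)
        · exact (setIntegral_Ioi_one_abs_sinc_pow_le hn).trans htail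
    _ = 12 / √n := by ring

lemma unifDensity_eq_indicator : unifDensity = (Icc (-1 : ℝ) 1).indicator fun _ ↦ 1 / 2 := by
  ext x
  simp [unifDensity, indicator_apply]

lemma measurable_unifDensity : Measurable unifDensity := by
  rw [unifDensity_eq_indicator]
  exact measurable_const.indicator measurableSet_Icc

lemma integrable_unifDensity : Integrable unifDensity := by
  rw [unifDensity_eq_indicator]
  exact (integrable_indicator_iff measurableSet_Icc).2 (integrableOn_const (by simp))

lemma integral_cos_sub_mul_mul_unifDensity (x t : ℝ) :
    ∫ τ, cos ((x - τ) * t) * unifDensity τ = cos (x * t) * sinc t := by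
  have hind : (fun τ ↦ cos ((x - τ) * t) * unifDensity τ) =
      (Icc (-1) 1).indicator fun τ ↦ cos ((x - τ) * t) * (1 / 2) := by
    ext τ
    simp [unifDensity_eq_indicator, indicator_apply]
  rw [hind, integral_indicator measurableSet_Icc, integral_Icc_eq_integral_Ioc,
    ← intervalIntegral.integral_of_le (by norm_num), intervalIntegral.integral_mul_const]
  rcases eq_or_ne t 0 with rfl | ht
  · norm_num
  simp_rw [sub_mul, mul_comm _ t]
  rw [intervalIntegral.integral_comp_sub_mul _ ht, integral_cos, sinc_of_ne_zero ht, smul_eq_mul,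
    mul_neg_one, mul_one, sub_neg_eq_add, sin_add, sin_sub]
  field_simp
  ring

lemma sumUnifDensity_two (x : ℝ) : sumUnifDensity 2 x = max (2 - |x|) 0 / 4 := by
  have hprod : (fun τ ↦ unifDensity (x - τ) * unifDensity τ) =
      (Icc (x - 1) (x + 1) ∩ Icc (-1) 1).indicator fun _ ↦ 1 / 4 := by
    ext τ
    simp only [unifDensity, indicator_apply, mem_inter_iff, mem_Icc]
    split_ifs <;> norm_num <;> grind
  have hlen : min (x + 1) 1 - max (x - 1) (-1) = 2 - |x| := by
    rcases abs_cases x with ⟨h, _⟩ | ⟨h, _⟩ <;> grind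
  show ∫ τ, unifDensity (x - τ) * unifDensity τ = _
  rw [hprod, integral_indicator_const _ (measurableSet_Icc.inter measurableSet_Icc), Icc_inter_Icc,
    Real.volume_real_Icc, smul_eq_mul, hlen]
  ring

noncomputable def cosTransformSincPow (n : ℕ) (x : ℝ) : ℝ := ∫ t, cos (x * t) * sinc t ^ n

lemma cosTransformSincPow_le {n : ℕ} (hn : 2 ≤ n) (x : ℝ) :
    cosTransformSincPow n x ≤ ∫ t, |sinc t| ^ n :=
  (le_norm_self _).trans <| norm_integral_le_of_norm_le (integrable_abs_sinc_pow hn) <|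
    ae_of_all _ fun t ↦ by
      rw [norm_mul, norm_pow, norm_eq_abs, norm_eq_abs]
      exact mul_le_of_le_one_left (by positivity) (abs_cos_le_one _)

lemma cosTransformSincPow_two (x : ℝ) :
    cosTransformSincPow 2 x = (∫ t, sinc t ^ 2) * (|x + 2| + |x - 2| - 2 * |x|) / 4 := by
  have hI := integrable_sq_mul_sinc_mul_sq
  simp_rw [cosTransformSincPow, cos_mul_mul_sinc_sq]
  rw [integral_sub, integral_add, integral_div, integral_div, integral_sq_mul_sinc_mul_sq,
    integral_sq_mul_sinc_mul_sq, integral_sq_mul_sinc_mul_sq]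
  · simp only [abs_div, abs_two]
    ring
  exacts [(hI _).div_const 2, (hI _).div_const 2, ((hI _).div_const 2).add ((hI _).div_const 2),
    hI _]

lemma integral_cosTransformSincPow_sub_mul_unifDensity {n : ℕ} (hn : 2 ≤ n) (x : ℝ) :
    ∫ τ, cosTransformSincPow n (x - τ) * unifDensity τ = cosTransformSincPow (n + 1) x := by
  set F : ℝ → ℝ → ℝ := fun τ t ↦ sinc t ^ n * (cos ((x - τ) * t) * unifDensity τ) with hF
  have hFint : Integrable (Function.uncurry F) (volume.prod volume) := by
    have hu := measurable_unifDensity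
    refine (integrable_unifDensity.mul_prod (integrable_abs_sinc_pow hn)).mono' (by fun_prop)
      (ae_of_all _ fun p ↦ ?_)
    simp only [Function.uncurry, hF, norm_mul, norm_pow, norm_eq_abs]
    have hu₀ : 0 ≤ unifDensity p.1 := by unfold unifDensity; split_ifs <;> norm_num
    calc |sinc p.2| ^ n * (|cos ((x - p.1) * p.2)| * |unifDensity p.1|)
        ≤ |sinc p.2| ^ n * (1 * |unifDensity p.1|) := by gcongr; exact abs_cos_le_one _
      _ = unifDensity p.1 * |sinc p.2| ^ n := by rw [abs_of_nonneg hu₀]; ring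
  calc ∫ τ, cosTransformSincPow n (x - τ) * unifDensity τ = ∫ τ, ∫ t, F τ t := by
        congr with τ
        rw [cosTransformSincPow, ← integral_mul_const]
        congr with t
        ring
    _ = ∫ t, ∫ τ, F τ t := integral_integral_swap hFint
    _ = cosTransformSincPow (n + 1) x := by
        congr with t
        rw [integral_const_mul, integral_cos_sub_mul_mul_unifDensity]
        ring

lemma sumUnifDensity_eq_cosTransformSincPow_div {n : ℕ} (hn : 2 ≤ n) :
    sumUnifDensity n = fun x ↦ cosTransformSincPow n x / (2 * ∫ t, sinc t ^ 2) := by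
  induction n, hn using Nat.le_induction with
  | base =>
    ext x
    have hS := integral_sinc_sq_pos.ne'
    have hmax : |x + 2| + |x - 2| - 2 * |x| = 2 * max (2 - |x|) 0 := by
      rcases abs_cases x with ⟨h, _⟩ | ⟨h, _⟩ <;> grind
    rw [sumUnifDensity_two, cosTransformSincPow_two, hmax]
    field_simp
  | succ n hn ih =>
    ext x
    obtain ⟨m, rfl⟩ : ∃ m, n = m + 1 := ⟨n - 1, by omega⟩
    show ∫ τ, sumUnifDensity (m + 1) (x - τ) * unifDensity τ = _
    simp_rw [ih, div_mul_eq_mul_div]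
    rw [integral_div, integral_cosTransformSincPow_sub_mul_unifDensity hn]

lemma sumUnifDensity_le {n : ℕ} (hn : 2 ≤ n) (x : ℝ) :
    sumUnifDensity n x ≤ 6 / (∫ t, sinc t ^ 2) / √n := by
  have hS := integral_sinc_sq_pos
  calc sumUnifDensity n x = cosTransformSincPow n x / (2 * ∫ t, sinc t ^ 2) := by
        rw [sumUnifDensity_eq_cosTransformSincPow_div hn]
    _ ≤ 12 / √n / (2 * ∫ t, sinc t ^ 2) := by
        gcongr
        exact (cosTransformSincPow_le hn x).trans (integral_abs_sinc_pow_le hn)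
    _ = 6 / (∫ t, sinc t ^ 2) / √n := by
        field_simp
        ring

theorem sumUnifDensity_upper :
    ∃ cu : ℝ, 0 < cu ∧ ∀ n : ℕ, 1 ≤ n → ∀ x : ℝ,
      sumUnifDensity n x ≤ cu / Real.sqrt n := by
  refine ⟨max (1 / 2) (6 / ∫ t, sinc t ^ 2), by positivity, fun n hn x ↦ ?_⟩
  rcases hn.eq_or_lt with rfl | hn
  · calc sumUnifDensity 1 x = unifDensity x := rfl
      _ ≤ 1 / 2 := by unfold unifDensity; split_ifs <;> norm_num
      _ ≤ max (1 / 2) (6 / ∫ t, sinc t ^ 2) / √(1 : ℕ) := by simp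
  exact (sumUnifDensity_le hn x).trans (by gcongr; exact le_max_right _ _)
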